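/- Let φ be a first-order sentence in the language of rings. If φ holds in some algebraically closed field of characteristic zero, then there exists a natural number p_0 such that φ holds in every algebraically closed field of characteristic p for all primes p > p_0. -/
import Mathlib

open FirstOrder Language

/-- **Lefschetz principle, positive-characteristic direction.**
If a first-order sentence `φ` in the language of rings holds in some algebraically closed
field of characteristic zero (some model of `ACF₀`), then there is `p₀ : ℕ` such that `φ`
holds in every algebraically closed field of characteristic `p` (every model of `ACF_p`)
for all primes `p > p₀`. -/
theorem lefschetz_of_char_zero (φ : Language.ring.Sentence)
    (h : ∃ M : (Theory.ACF 0).ModelType, M ⊨ φ) :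
    ∃ p₀ : ℕ, ∀ p : ℕ, p.Prime → p₀ < p →
      ∀ M : (Theory.ACF p).ModelType, M ⊨ φ := by
  obtain ⟨M, hM⟩ := h
  have h0 : Theory.ACF 0 ⊨ᵇ φ := by
    rcases (Field.ACF_isComplete (Or.inr rfl)).2 φ with h' | h'
    · exact h'
    · exact absurd hM (by simpa using h'.realize_sentence M)
  have hfin := Field.finite_ACF_prime_not_realize_of_ACF_zero_realize φ h0
  obtain ⟨p₀, hp₀⟩ := (hfin.image (fun q : Nat.Primes => (q : ℕ))).bddAbove
  refine ⟨p₀, fun p hp hgt M => ?_⟩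
  have : Theory.ACF p ⊨ᵇ φ := by
    by_contra hc
    have : (⟨p, hp⟩ : Nat.Primes) ∈ { q : Nat.Primes | ¬ Theory.ACF q ⊨ᵇ φ } := hc
    have hle : p ≤ p₀ := hp₀ (Set.mem_image_of_mem _ this)
    omega
  exact this.realize_sentence M
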